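/- Let N ≥ 1 be an integer, τ ∈ ℍ, and z, w ∈ ℂ with 0 < −Im(w) < Im(τ). Then f_N(z,w;τ) = e^{−2πiNw} · A_{2N}(w, z − Nτ; τ), where A_{2N} is Zwegers' level-2N Appell function (the hypothesis on w guarantees w ∉ ℤτ + ℤ, so the right-hand side is defined). -/

import Mathlib

open Complex

noncomputable section

/-- The general term `e^{2πi(mz+nw)} · q^{Nm²+mn}` with `q = e^{2πiτ}`. -/
def fterm (N : ℕ) (z w τ : ℂ) (m n : ℤ) : ℂ :=
  Complex.exp (2 * Real.pi * I * ((m : ℂ) * z + (n : ℂ) * w)) *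
    Complex.exp (2 * Real.pi * I * τ) ^ ((N : ℤ) * m ^ 2 + m * n)

/-- `f_N(z,w;τ) = Σ_{m≥1,n≥0} e^{2πi(mz+nw)} q^{Nm²+mn} − Σ_{m≤0,n≤−1} e^{2πi(mz+nw)} q^{Nm²+mn}`. -/
def fN (N : ℕ) (z w τ : ℂ) : ℂ :=
  (∑' p : {p : ℤ × ℤ // 1 ≤ p.1 ∧ 0 ≤ p.2}, fterm N z w τ p.1.1 p.1.2) -
    ∑' p : {p : ℤ × ℤ // p.1 ≤ 0 ∧ p.2 ≤ -1}, fterm N z w τ p.1.1 p.1.2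

/-- Zwegers' level-`ℓ` Appell function
`A_ℓ(z,w;τ) = e^{πiℓz} Σ_{m∈ℤ} (−1)^{ℓm} q^{ℓm(m+1)/2} e^{2πimw} / (1 − e^{2πiz} q^m)`,
where `q^{ℓm(m+1)/2} = e^{πiτℓm(m+1)}`. -/
def appell (ℓ : ℕ) (z w τ : ℂ) : ℂ :=
  Complex.exp (Real.pi * I * ℓ * z) *
    ∑' m : ℤ, (-1 : ℂ) ^ ((ℓ : ℤ) * m) * Complex.exp (Real.pi * I * τ * ℓ * m * (m + 1)) *
      Complex.exp (2 * Real.pi * I * m * w) /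
        (1 - Complex.exp (2 * Real.pi * I * z) * Complex.exp (2 * Real.pi * I * τ) ^ m)

/-- The Jacobi theta function `ϑ(z;τ) = Σ_{n∈ℤ+1/2} e^{2πin(z+1/2)} q^{n²/2}`, written with
`n = k + 1/2`, `k ∈ ℤ`, and `q^{n²/2} = e^{πiτn²}`. -/
def thetaFn (z τ : ℂ) : ℂ :=
  ∑' k : ℤ, Complex.exp (2 * Real.pi * I * ((k : ℂ) + 1 / 2) * (z + 1 / 2)) *
    Complex.exp (Real.pi * I * τ * ((k : ℂ) + 1 / 2) ^ 2)

/-- `E(x) = 2∫₀ˣ e^{−πt²} dt`. -/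
def Efun (x : ℝ) : ℝ := 2 * ∫ t in (0:ℝ)..x, Real.exp (-Real.pi * t ^ 2)

/-- `R(z;τ) = Σ_{n∈ℤ+1/2} (sgn(n) − E((n + Im z/Im τ)√(2 Im τ))) (−1)^{n−1/2} q^{−n²/2} e^{−2πinz}`,
written with `n = k + 1/2`, `k ∈ ℤ`. -/
def RFn (z τ : ℂ) : ℂ :=
  ∑' k : ℤ, (((if (0:ℤ) ≤ k then (1:ℝ) else -1) -
      Efun (((k : ℝ) + 1 / 2 + z.im / τ.im) * Real.sqrt (2 * τ.im)) : ℝ) : ℂ) *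
    (-1 : ℂ) ^ k * Complex.exp (-Real.pi * I * τ * ((k : ℂ) + 1 / 2) ^ 2) *
      Complex.exp (-2 * Real.pi * I * ((k : ℂ) + 1 / 2) * z)

/-- Zwegers' completed Appell function `Â_ℓ`. -/
def appellHat (ℓ : ℕ) (z w τ : ℂ) : ℂ :=
  appell ℓ z w τ + (I / 2) * ∑ k ∈ Finset.range ℓ,
    Complex.exp (2 * Real.pi * I * k * z) *
      thetaFn (w + k * τ + ((ℓ : ℂ) - 1) / 2) (ℓ * τ) *
        RFn ((ℓ : ℂ) * z - w - k * τ - ((ℓ : ℂ) - 1) / 2) (ℓ * τ)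

/-- The completed function `f̂_N(z,w;τ) := Â_{2N}(w,z;τ)`. -/
def fNhat (N : ℕ) (z w τ : ℂ) : ℂ := appellHat (2 * N) w z τ

set_option maxHeartbeats 1000000

open Filter Topology

private lemma norm_cexp (c : ℂ) : ‖Complex.exp c‖ = Real.exp c.re := by
  rw [Complex.norm_exp]

private lemma norm_cexp2pi (c : ℂ) :
    ‖Complex.exp (2 * Real.pi * I * c)‖ = Real.exp (-(2 * Real.pi * c.im)) := by
  rw [norm_cexp]
  congr 1
  simp [Complex.mul_re, Complex.mul_im]

private def qq (τ : ℂ) : ℂ := Complex.exp (2 * Real.pi * I * τ)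

private def Xf (w τ : ℂ) (m : ℤ) : ℂ := Complex.exp (2 * Real.pi * I * w) * qq τ ^ m

private def Ef (N : ℕ) (z τ : ℂ) (m : ℤ) : ℂ :=
  Complex.exp (2 * Real.pi * I * (m : ℂ) * z) * qq τ ^ ((N : ℤ) * m ^ 2)

private def gf (N : ℕ) (z w τ : ℂ) (m : ℤ) : ℂ := Ef N z τ m * (1 - Xf w τ m)⁻¹

private lemma qq_ne (τ : ℂ) : qq τ ≠ 0 := Complex.exp_ne_zero _

private lemma Xf_ne (w τ : ℂ) (m : ℤ) : Xf w τ m ≠ 0 :=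
  mul_ne_zero (Complex.exp_ne_zero _) (zpow_ne_zero _ (qq_ne τ))

private lemma Xf_exp (w τ : ℂ) (m : ℤ) :
    Xf w τ m = Complex.exp (2 * Real.pi * I * (w + m * τ)) := by
  rw [Xf, qq, ← Complex.exp_int_mul, ← Complex.exp_add]
  congr 1
  ring

private lemma Ef_exp (N : ℕ) (z τ : ℂ) (m : ℤ) :
    Ef N z τ m = Complex.exp (2 * Real.pi * I * ((m : ℂ) * z + (((N : ℤ) * m ^ 2 : ℤ) : ℂ) * τ)) := by
  rw [Ef, qq, ← Complex.exp_int_mul, ← Complex.exp_add]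
  congr 1
  push_cast
  ring

private lemma Xf_norm (w τ : ℂ) (m : ℤ) :
    ‖Xf w τ m‖ = Real.exp (-(2 * Real.pi * (w.im + m * τ.im))) := by
  rw [Xf_exp, norm_cexp2pi]
  congr 2
  simp

private lemma Ef_norm (N : ℕ) (z τ : ℂ) (m : ℤ) :
    ‖Ef N z τ m‖ = Real.exp (-(2 * Real.pi * ((m : ℝ) * z.im + (N : ℝ) * (m : ℝ) ^ 2 * τ.im))) := by
  rw [Ef_exp, norm_cexp2pi]
  congr 2
  simp only [Complex.add_im, Complex.mul_im, Complex.mul_re, Complex.intCast_re,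
    Complex.intCast_im]
  push_cast
  ring

private lemma fterm_pos (N : ℕ) (z w τ : ℂ) (m : ℤ) (k : ℕ) :
    fterm N z w τ m (k : ℤ) = Ef N z τ m * Xf w τ m ^ k := by
  rw [Ef_exp, Xf_exp, fterm, ← Complex.exp_int_mul, ← Complex.exp_nat_mul, ← Complex.exp_add,
    ← Complex.exp_add]
  congr 1
  push_cast
  ring

private lemma fterm_neg (N : ℕ) (z w τ : ℂ) (m : ℤ) (k : ℕ) :
    fterm N z w τ m (-1 - (k : ℤ)) = Ef N z τ m * ((Xf w τ m)⁻¹) ^ (k + 1) := by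
  have hzp : ((Xf w τ m)⁻¹) ^ (k + 1)
      = Complex.exp (2 * Real.pi * I * (w + m * τ)) ^ (-((k + 1 : ℕ) : ℤ)) := by
    rw [Xf_exp, zpow_neg, zpow_natCast, inv_pow]
  rw [hzp, fterm, ← Complex.exp_int_mul, ← Complex.exp_int_mul, ← Complex.exp_add, Ef_exp,
    ← Complex.exp_add]
  congr 1
  push_cast
  ring

private lemma summable_exp_quad (d e : ℝ) (he : 0 < e) :
    Summable fun n : ℕ => Real.exp (d * n - e * (n : ℝ) ^ 2) := by
  have key : ∀ n : ℕ,
      ‖Real.exp (d * (n + 1 : ℕ) - e * ((n + 1 : ℕ) : ℝ) ^ 2)‖ /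
        ‖Real.exp (d * n - e * (n : ℝ) ^ 2)‖ = Real.exp (d - e * (2 * n + 1)) := by
    intro n
    rw [Real.norm_eq_abs, Real.norm_eq_abs, abs_of_pos (Real.exp_pos _),
      abs_of_pos (Real.exp_pos _), ← Real.exp_sub]
    congr 1
    push_cast
    ring
  have h1 : Tendsto (fun n : ℕ => 2 * e * (n : ℝ)) atTop atTop :=
    Tendsto.const_mul_atTop (by positivity) tendsto_natCast_atTop_atTop
  have h2 : Tendsto (fun n : ℕ => (d - e) + -(2 * e * (n : ℝ))) atTop atBot :=
    tendsto_atBot_add_const_left _ _ (tendsto_neg_atTop_atBot.comp h1)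
  have h3 : Tendsto (fun n : ℕ => Real.exp (d - e * (2 * (n : ℝ) + 1))) atTop (𝓝 0) :=
    Real.tendsto_exp_atBot.comp (h2.congr fun n => by ring)
  exact summable_of_ratio_test_tendsto_lt_one zero_lt_one
    (Eventually.of_forall fun n => (Real.exp_pos _).ne')
    (Tendsto.congr (fun n => (key n).symm) h3)

private lemma Ef_summable (N : ℕ) (hN : 1 ≤ N) (z τ : ℂ) (hτ : 0 < τ.im) :
    Summable fun m : ℤ => ‖Ef N z τ m‖ := by
  have he : 0 < 2 * Real.pi * τ.im := by positivity
  have hb := summable_exp_quad (2 * Real.pi * |z.im|) (2 * Real.pi * τ.im) he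
  have hN' : (1 : ℝ) ≤ N := by exact_mod_cast hN
  apply Summable.of_nat_of_neg
  · refine Summable.of_nonneg_of_le (fun n => norm_nonneg _) (fun n => ?_) hb
    rw [Ef_norm]
    apply Real.exp_le_exp.2
    push_cast
    have h1 : -((n : ℝ) * z.im) ≤ |z.im| * n := by
      have hz := neg_le_abs z.im
      nlinarith [Nat.cast_nonneg (α := ℝ) n]
    have h2 : 0 ≤ 2 * Real.pi * τ.im * (n : ℝ) ^ 2 * ((N : ℝ) - 1) := by
      apply mul_nonneg (by positivity) (by linarith)
    nlinarith [Real.pi_pos, mul_le_mul_of_nonneg_left h1 (by positivity : (0:ℝ) ≤ 2 * Real.pi)]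
  · refine Summable.of_nonneg_of_le (fun n => norm_nonneg _) (fun n => ?_) hb
    rw [Ef_norm]
    apply Real.exp_le_exp.2
    push_cast
    have h1 : (n : ℝ) * z.im ≤ |z.im| * n := by
      rw [mul_comm]; exact mul_le_mul_of_nonneg_right (le_abs_self _) (Nat.cast_nonneg n)
    have h2 : 0 ≤ 2 * Real.pi * τ.im * (n : ℝ) ^ 2 * ((N : ℝ) - 1) := by
      apply mul_nonneg (by positivity) (by linarith)
    nlinarith [Real.pi_pos, mul_le_mul_of_nonneg_left h1 (by positivity : (0:ℝ) ≤ 2 * Real.pi)]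

private lemma Xf_norm_le_pos (w τ : ℂ) (hτ : 0 < τ.im) (m : ℤ) (hm : 1 ≤ m) :
    ‖Xf w τ m‖ ≤ Real.exp (-(2 * Real.pi * (w.im + τ.im))) := by
  rw [Xf_norm]
  apply Real.exp_le_exp.2
  have hm' : (1 : ℝ) ≤ m := by exact_mod_cast hm
  nlinarith [Real.pi_pos, mul_nonneg (by linarith : (0:ℝ) ≤ (m:ℝ) - 1) hτ.le]

private lemma Xf_inv_norm_le (w τ : ℂ) (hτ : 0 < τ.im) (m : ℤ) (hm : m ≤ 0) :
    ‖(Xf w τ m)⁻¹‖ ≤ Real.exp (2 * Real.pi * w.im) := by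
  rw [norm_inv, Xf_norm, ← Real.exp_neg]
  apply Real.exp_le_exp.2
  have hm' : (m : ℝ) ≤ 0 := by exact_mod_cast hm
  nlinarith [Real.pi_pos, mul_nonneg (by linarith : (0:ℝ) ≤ -(m:ℝ)) hτ.le]

private def sPos : Set ℤ := {m : ℤ | 1 ≤ m}

private def ePos : ↥sPos × ℕ ≃ {p : ℤ × ℤ // 1 ≤ p.1 ∧ 0 ≤ p.2} where
  toFun x := ⟨(x.1.1, (x.2 : ℤ)), ⟨x.1.2, Int.natCast_nonneg x.2⟩⟩
  invFun p := (⟨p.1.1, p.2.1⟩, p.1.2.toNat)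
  left_inv := by rintro ⟨⟨m, hm⟩, k⟩; simp
  right_inv := by rintro ⟨⟨m, n⟩, hm, hn⟩; simp [Int.toNat_of_nonneg hn]

private def eNeg : ↥sPosᶜ × ℕ ≃ {p : ℤ × ℤ // p.1 ≤ 0 ∧ p.2 ≤ -1} where
  toFun x := ⟨(x.1.1, -1 - (x.2 : ℤ)),
    ⟨by have h := x.1.2; simp only [sPos, Set.mem_compl_iff, Set.mem_setOf_eq] at h; omega,
     by omega⟩⟩
  invFun p := (⟨p.1.1, by
      have h := p.2.1
      simp only [sPos, Set.mem_compl_iff, Set.mem_setOf_eq]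
      omega⟩, (-1 - p.1.2).toNat)
  left_inv := by
    rintro ⟨⟨m, hm⟩, k⟩
    refine Prod.ext (Subtype.ext rfl) ?_
    simp only
    omega
  right_inv := by
    rintro ⟨⟨m, n⟩, h1, h2⟩
    refine Subtype.ext (Prod.ext rfl ?_)
    simp only
    omega

private lemma summable_pos (N : ℕ) (hN : 1 ≤ N) (z w τ : ℂ) (hτ : 0 < τ.im)
    (hw2 : -w.im < τ.im) :
    Summable fun x : ↥sPos × ℕ => fterm N z w τ x.1.1 x.2 := by
  set ρ := Real.exp (-(2 * Real.pi * (w.im + τ.im))) with hρdef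
  have hρ1 : ρ < 1 := Real.exp_lt_one_iff.2 (by nlinarith [Real.pi_pos])
  have hXle : ∀ x : ↥sPos, ‖Xf w τ x.1‖ ≤ ρ := fun x => Xf_norm_le_pos w τ hτ x.1 x.2
  have hXlt : ∀ x : ↥sPos, ‖Xf w τ x.1‖ < 1 := fun x => lt_of_le_of_lt (hXle x) hρ1
  apply Summable.of_norm
  have heq : ∀ x : ↥sPos × ℕ,
      ‖Ef N z τ x.1.1‖ * ‖Xf w τ x.1.1‖ ^ x.2 = ‖fterm N z w τ x.1.1 x.2‖ := by
    intro x; rw [fterm_pos, norm_mul, norm_pow]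
  have hnn : (0 : ↥sPos × ℕ → ℝ)
      ≤ fun x => ‖Ef N z τ x.1.1‖ * ‖Xf w τ x.1.1‖ ^ x.2 := fun x => by positivity
  refine Summable.congr ((summable_prod_of_nonneg hnn).2 ⟨?_, ?_⟩) heq
  · intro m
    show Summable fun k : ℕ => ‖Ef N z τ (m : ℤ)‖ * ‖Xf w τ (m : ℤ)‖ ^ k
    exact (summable_geometric_of_lt_one (norm_nonneg _) (hXlt m)).mul_left _
  · show Summable fun m : ↥sPos => ∑' k : ℕ, ‖Ef N z τ (m : ℤ)‖ * ‖Xf w τ (m : ℤ)‖ ^ k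
    have hval : ∀ m : ↥sPos, (∑' k : ℕ, ‖Ef N z τ m.1‖ * ‖Xf w τ m.1‖ ^ k)
        = ‖Ef N z τ m.1‖ * (1 - ‖Xf w τ m.1‖)⁻¹ := by
      intro m
      rw [tsum_mul_left, tsum_geometric_of_lt_one (norm_nonneg _) (hXlt m)]
    refine Summable.of_nonneg_of_le (fun m => tsum_nonneg fun k => by positivity)
      (fun m => ?_) (((Ef_summable N hN z τ hτ).subtype sPos).mul_right (1 - ρ)⁻¹)
    rw [hval]
    exact mul_le_mul_of_nonneg_left
      (inv_anti₀ (by linarith) (by linarith [hXle m])) (norm_nonneg _)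

private lemma summable_neg (N : ℕ) (hN : 1 ≤ N) (z w τ : ℂ) (hτ : 0 < τ.im)
    (hw1 : 0 < -w.im) :
    Summable fun x : ↥sPosᶜ × ℕ => fterm N z w τ x.1.1 (-1 - (x.2 : ℤ)) := by
  set σ := Real.exp (2 * Real.pi * w.im) with hσdef
  have hσ1 : σ < 1 := Real.exp_lt_one_iff.2 (by nlinarith [Real.pi_pos])
  have hσ0 : 0 < σ := Real.exp_pos _
  have hm0 : ∀ x : ↥sPosᶜ, x.1 ≤ 0 := by
    intro x
    have h := x.2
    simp only [sPos, Set.mem_compl_iff, Set.mem_setOf_eq] at h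
    omega
  have hYle : ∀ x : ↥sPosᶜ, ‖(Xf w τ x.1)⁻¹‖ ≤ σ := fun x =>
    Xf_inv_norm_le w τ hτ x.1 (hm0 x)
  have hYlt : ∀ x : ↥sPosᶜ, ‖(Xf w τ x.1)⁻¹‖ < 1 := fun x => lt_of_le_of_lt (hYle x) hσ1
  apply Summable.of_norm
  have heq : ∀ x : ↥sPosᶜ × ℕ,
      ‖Ef N z τ x.1.1‖ * ‖(Xf w τ x.1.1)⁻¹‖ ^ (x.2 + 1)
        = ‖fterm N z w τ x.1.1 (-1 - (x.2 : ℤ))‖ := by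
    intro x; rw [fterm_neg, norm_mul, norm_pow]
  have hnn : (0 : ↥sPosᶜ × ℕ → ℝ)
      ≤ fun x => ‖Ef N z τ x.1.1‖ * ‖(Xf w τ x.1.1)⁻¹‖ ^ (x.2 + 1) := fun x => by positivity
  refine Summable.congr ((summable_prod_of_nonneg hnn).2 ⟨?_, ?_⟩) heq
  · intro m
    show Summable fun k : ℕ => ‖Ef N z τ (m : ℤ)‖ * ‖(Xf w τ (m : ℤ))⁻¹‖ ^ (k + 1)
    apply Summable.congr (((summable_geometric_of_lt_one (norm_nonneg _)
      (hYlt m)).mul_left (‖Ef N z τ m.1‖ * ‖(Xf w τ m.1)⁻¹‖)))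
    intro k
    rw [pow_succ]
    ring
  · show Summable fun m : ↥sPosᶜ =>
        ∑' k : ℕ, ‖Ef N z τ (m : ℤ)‖ * ‖(Xf w τ (m : ℤ))⁻¹‖ ^ (k + 1)
    have hval : ∀ m : ↥sPosᶜ, (∑' k : ℕ, ‖Ef N z τ m.1‖ * ‖(Xf w τ m.1)⁻¹‖ ^ (k + 1))
        = ‖Ef N z τ m.1‖ * ‖(Xf w τ m.1)⁻¹‖ * (1 - ‖(Xf w τ m.1)⁻¹‖)⁻¹ := by
      intro m
      rw [show (fun k : ℕ => ‖Ef N z τ m.1‖ * ‖(Xf w τ m.1)⁻¹‖ ^ (k + 1))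
          = fun k : ℕ => (‖Ef N z τ m.1‖ * ‖(Xf w τ m.1)⁻¹‖) * ‖(Xf w τ m.1)⁻¹‖ ^ k by
        funext k; rw [pow_succ]; ring]
      rw [tsum_mul_left, tsum_geometric_of_lt_one (norm_nonneg _) (hYlt m)]
    refine Summable.of_nonneg_of_le (fun m => tsum_nonneg fun k => by positivity)
      (fun m => ?_) (((Ef_summable N hN z τ hτ).subtype sPosᶜ).mul_right (σ * (1 - σ)⁻¹))
    rw [hval, mul_assoc, ← mul_assoc]
    have h1 : 0 ≤ (1 - ‖(Xf w τ m.1)⁻¹‖)⁻¹ := inv_nonneg.2 (by linarith [hYlt m])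
    calc ‖Ef N z τ m.1‖ * ‖(Xf w τ m.1)⁻¹‖ * (1 - ‖(Xf w τ m.1)⁻¹‖)⁻¹
        ≤ ‖Ef N z τ m.1‖ * σ * (1 - σ)⁻¹ := by
          apply mul_le_mul
          · exact mul_le_mul_of_nonneg_left (hYle m) (norm_nonneg _)
          · exact inv_anti₀ (by linarith) (by linarith [hYle m])
          · exact h1
          · positivity
      _ = ‖Ef N z τ m.1‖ * (σ * (1 - σ)⁻¹) := by ring

private lemma gf_summable (N : ℕ) (hN : 1 ≤ N) (z w τ : ℂ) (hτ : 0 < τ.im)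
    (hw1 : 0 < -w.im) (hw2 : -w.im < τ.im) :
    Summable (gf N z w τ) := by
  set ρ := Real.exp (-(2 * Real.pi * (w.im + τ.im))) with hρdef
  have hρ1 : ρ < 1 := Real.exp_lt_one_iff.2 (by nlinarith [Real.pi_pos])
  have hρ0 : 0 < ρ := Real.exp_pos _
  set σ := Real.exp (2 * Real.pi * w.im) with hσdef
  have hσ1 : σ < 1 := Real.exp_lt_one_iff.2 (by nlinarith [Real.pi_pos])
  have hσ0 : 0 < σ := Real.exp_pos _
  set C := max (1 - ρ)⁻¹ (σ⁻¹ - 1)⁻¹ with hCdef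
  apply Summable.of_norm
  refine Summable.of_nonneg_of_le (fun m => norm_nonneg _) (fun m => ?_)
    ((Ef_summable N hN z τ hτ).mul_right C)
  rw [gf, norm_mul]
  apply mul_le_mul_of_nonneg_left _ (norm_nonneg _)
  rw [norm_inv]
  rcases le_or_gt 1 m with hm | hm
  · have h1 : ‖Xf w τ m‖ ≤ ρ := Xf_norm_le_pos w τ hτ m hm
    have h2 : 1 - ρ ≤ ‖1 - Xf w τ m‖ := by
      have h3 := norm_sub_norm_le (1 : ℂ) (Xf w τ m)
      simp only [norm_one] at h3
      linarith
    exact le_trans (inv_anti₀ (by linarith) h2) (le_max_left _ _)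
  · have hm0 : m ≤ 0 := by omega
    have h1 : ‖(Xf w τ m)⁻¹‖ ≤ σ := Xf_inv_norm_le w τ hτ m hm0
    rw [norm_inv] at h1
    have hX0 : 0 < ‖Xf w τ m‖ := norm_pos_iff.2 (Xf_ne w τ m)
    have h2 : σ⁻¹ ≤ ‖Xf w τ m‖ := by
      have h4 := inv_anti₀ (inv_pos.2 hX0) h1
      rwa [inv_inv] at h4
    have hσinv : 1 < σ⁻¹ := (one_lt_inv₀ hσ0).2 hσ1
    have h3 : σ⁻¹ - 1 ≤ ‖1 - Xf w τ m‖ := by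
      have h5 := norm_sub_norm_le (Xf w τ m) (1 : ℂ)
      rw [norm_sub_rev] at h5
      simp only [norm_one] at h5
      linarith
    exact le_trans (inv_anti₀ (by linarith) h3) (le_max_right _ _)

private lemma T1_eq (N : ℕ) (hN : 1 ≤ N) (z w τ : ℂ) (hτ : 0 < τ.im)
    (hw2 : -w.im < τ.im) :
    (∑' p : {p : ℤ × ℤ // 1 ≤ p.1 ∧ 0 ≤ p.2}, fterm N z w τ p.1.1 p.1.2)
      = ∑' m : ↥sPos, gf N z w τ m := by
  have hρ1 : Real.exp (-(2 * Real.pi * (w.im + τ.im))) < 1 :=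
    Real.exp_lt_one_iff.2 (by nlinarith [Real.pi_pos])
  have hXlt : ∀ x : ↥sPos, ‖Xf w τ x.1‖ < 1 := fun x =>
    lt_of_le_of_lt (Xf_norm_le_pos w τ hτ x.1 x.2) hρ1
  have hsum := summable_pos N hN z w τ hτ hw2
  calc (∑' p : {p : ℤ × ℤ // 1 ≤ p.1 ∧ 0 ≤ p.2}, fterm N z w τ p.1.1 p.1.2)
      = ∑' x : ↥sPos × ℕ, fterm N z w τ x.1.1 x.2 :=
        (Equiv.tsum_eq ePos
          (fun p : {p : ℤ × ℤ // 1 ≤ p.1 ∧ 0 ≤ p.2} => fterm N z w τ p.1.1 p.1.2)).symm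
    _ = ∑' (m : ↥sPos) (k : ℕ), fterm N z w τ m.1 k :=
        Summable.tsum_prod' hsum (fun m => hsum.prod_factor m)
    _ = ∑' m : ↥sPos, gf N z w τ m := by
        refine tsum_congr fun m => ?_
        rw [tsum_congr fun k : ℕ => fterm_pos N z w τ m.1 k, tsum_mul_left,
          tsum_geometric_of_norm_lt_one (hXlt m), gf]

private lemma T2_eq (N : ℕ) (hN : 1 ≤ N) (z w τ : ℂ) (hτ : 0 < τ.im)
    (hw1 : 0 < -w.im) :
    (∑' p : {p : ℤ × ℤ // p.1 ≤ 0 ∧ p.2 ≤ -1}, fterm N z w τ p.1.1 p.1.2)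
      = -∑' m : ↥sPosᶜ, gf N z w τ m := by
  have hσ1 : Real.exp (2 * Real.pi * w.im) < 1 :=
    Real.exp_lt_one_iff.2 (by nlinarith [Real.pi_pos])
  have hm0 : ∀ x : ↥sPosᶜ, x.1 ≤ 0 := by
    intro x
    have h := x.2
    simp only [sPos, Set.mem_compl_iff, Set.mem_setOf_eq] at h
    omega
  have hYlt : ∀ x : ↥sPosᶜ, ‖(Xf w τ x.1)⁻¹‖ < 1 := fun x =>
    lt_of_le_of_lt (Xf_inv_norm_le w τ hτ x.1 (hm0 x)) hσ1
  have hsum := summable_neg N hN z w τ hτ hw1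
  calc (∑' p : {p : ℤ × ℤ // p.1 ≤ 0 ∧ p.2 ≤ -1}, fterm N z w τ p.1.1 p.1.2)
      = ∑' x : ↥sPosᶜ × ℕ, fterm N z w τ x.1.1 (-1 - (x.2 : ℤ)) :=
        (Equiv.tsum_eq eNeg
          (fun p : {p : ℤ × ℤ // p.1 ≤ 0 ∧ p.2 ≤ -1} => fterm N z w τ p.1.1 p.1.2)).symm
    _ = ∑' (m : ↥sPosᶜ) (k : ℕ), fterm N z w τ m.1 (-1 - (k : ℤ)) :=
        Summable.tsum_prod' hsum (fun m => hsum.prod_factor m)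
    _ = ∑' m : ↥sPosᶜ, -gf N z w τ m := by
        refine tsum_congr fun m => ?_
        have hstep : ∀ k : ℕ, fterm N z w τ m.1 (-1 - (k : ℤ))
            = (Ef N z τ m.1 * (Xf w τ m.1)⁻¹) * ((Xf w τ m.1)⁻¹) ^ k := by
          intro k
          rw [fterm_neg, pow_succ]
          ring
        rw [tsum_congr hstep, tsum_mul_left, tsum_geometric_of_norm_lt_one (hYlt m), gf]
        have hX0 : Xf w τ m.1 ≠ 0 := Xf_ne w τ m.1
        have h1 : 1 - (Xf w τ m.1)⁻¹ ≠ 0 := by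
          intro h
          rw [sub_eq_zero] at h
          have := hYlt m
          rw [← h, norm_one] at this
          exact lt_irrefl _ this
        have h2 : 1 - Xf w τ m.1 ≠ 0 := by
          intro h
          rw [sub_eq_zero] at h
          have := hYlt m
          rw [← h, inv_one, norm_one] at this
          exact lt_irrefl _ this
        have h2' : -1 + Xf w τ m.1 ≠ 0 := fun h => h2 (by linear_combination -h)
        field_simp
        have hcan : (-1 + Xf w τ m.1)⁻¹ * (-1 + Xf w τ m.1) = 1 := inv_mul_cancel₀ h2'
        linear_combination (-(Ef N z τ m.1)) * hcan
    _ = -∑' m : ↥sPosᶜ, gf N z w τ m := tsum_neg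

private lemma RHS_eq (N : ℕ) (z w τ : ℂ) :
    Complex.exp (-2 * Real.pi * I * N * w) * appell (2 * N) w (z - N * τ) τ
      = ∑' m : ℤ, gf N z w τ m := by
  rw [appell, ← mul_assoc, ← Complex.exp_add,
    show -2 * (Real.pi : ℂ) * I * N * w + Real.pi * I * ((2 * N : ℕ) : ℂ) * w = 0 by
      push_cast; ring,
    Complex.exp_zero, one_mul]
  refine tsum_congr fun m => ?_
  have hsign : ((-1 : ℂ)) ^ (((2 * N : ℕ) : ℤ) * m) = 1 := by
    rw [show ((2 * N : ℕ) : ℤ) * m = 2 * ((N : ℤ) * m) by push_cast; ring, zpow_mul]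
    norm_num
  rw [hsign, one_mul, ← Complex.exp_add, div_eq_mul_inv, gf, Ef_exp, Xf, qq]
  congr 2
  push_cast
  ring

theorem stmt9 (N : ℕ) (hN : 1 ≤ N) (τ z w : ℂ) (hτ : 0 < τ.im)
    (hw1 : 0 < -w.im) (hw2 : -w.im < τ.im) :
    fN N z w τ = Complex.exp (-2 * Real.pi * I * N * w) * appell (2 * N) w (z - N * τ) τ := by
  rw [fN, T1_eq N hN z w τ hτ hw2, T2_eq N hN z w τ hτ hw1, sub_neg_eq_add,
    Summable.tsum_subtype_add_tsum_subtype_compl (gf_summable N hN z w τ hτ hw1 hw2) sPos, RHS_eq]
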